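/- arXiv:1605.08370 — 7 statements merged into one kernel-verified Lean document; each statement's English description precedes it below -/
import Mathlib

section
/- For the function f(U) = ||M - U Uᵀ||_F², if U₁ and U₂ are d×k real matrices with spectral norms at most Γ, then ||∇f(U₁) - ∇f(U₂)||_F ≤ 16 max(Γ², ||M||) ||U₁ - U₂||_F, where ∇f(U) = 4(U Uᵀ - M)U. -/
open Matrix

noncomputable def frob {m n : ℕ} (A : Matrix (Fin m) (Fin n) ℝ) : ℝ :=
  Real.sqrt (∑ i, ∑ j, (A i j)^2)

noncomputable def spec {m n : ℕ} (A : Matrix (Fin m) (Fin n) ℝ) : ℝ :=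
  ‖LinearMap.toContinuousLinearMap (Matrix.toEuclideanLin A)‖

noncomputable def sigmaMin {m n : ℕ} (A : Matrix (Fin m) (Fin n) ℝ) : ℝ :=
  sInf {c | ∃ x : EuclideanSpace ℝ (Fin n), ‖x‖ = 1 ∧ c = ‖Matrix.toEuclideanLin A x‖}

lemma spec_nonneg {m n : ℕ} (A : Matrix (Fin m) (Fin n) ℝ) : 0 ≤ spec A := norm_nonneg _

lemma frob_nonneg {m n : ℕ} (A : Matrix (Fin m) (Fin n) ℝ) : 0 ≤ frob A := Real.sqrt_nonneg _

lemma frob_eq_norm {m n : ℕ} (A : Matrix (Fin m) (Fin n) ℝ) :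
    frob A = ‖(WithLp.equiv 2 (Fin m × Fin n → ℝ)).symm (fun p => A p.1 p.2)‖ := by
  rw [EuclideanSpace.norm_eq, frob]
  simp [Real.norm_eq_abs, sq_abs, Fintype.sum_prod_type]

lemma frob_add_le {m n : ℕ} (A B : Matrix (Fin m) (Fin n) ℝ) :
    frob (A + B) ≤ frob A + frob B := by
  simp only [frob_eq_norm]
  have : ((WithLp.equiv 2 (Fin m × Fin n → ℝ)).symm (fun p => (A + B) p.1 p.2) : EuclideanSpace ℝ (Fin m × Fin n)) =
      (WithLp.equiv 2 (Fin m × Fin n → ℝ)).symm (fun p => A p.1 p.2)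
      + (WithLp.equiv 2 (Fin m × Fin n → ℝ)).symm (fun p => B p.1 p.2) := by
    ext p; simp
  rw [this]
  exact norm_add_le _ _

lemma frob_transpose {m n : ℕ} (A : Matrix (Fin m) (Fin n) ℝ) : frob Aᵀ = frob A := by
  rw [frob, frob, Finset.sum_comm]
  rfl

lemma frob_smul {m n : ℕ} (c : ℝ) (hc : 0 ≤ c) (A : Matrix (Fin m) (Fin n) ℝ) :
    frob (c • A) = c * frob A := by
  rw [frob, frob]
  simp only [Matrix.smul_apply, smul_eq_mul, mul_pow, ← Finset.mul_sum]
  rw [Real.sqrt_mul (by positivity), Real.sqrt_sq hc]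

lemma frob_mul_le_left {m n l : ℕ} (A : Matrix (Fin m) (Fin n) ℝ) (B : Matrix (Fin n) (Fin l) ℝ) :
    frob (A * B) ≤ spec A * frob B := by
  have key : ∑ i, ∑ j, ((A * B) i j)^2 ≤ (spec A)^2 * ∑ i, ∑ j, (B i j)^2 := by
    rw [Finset.sum_comm, Finset.sum_comm (s := Finset.univ) (f := fun i j => (B i j)^2)]
    rw [Finset.mul_sum]
    apply Finset.sum_le_sum
    intro j _
    set x : EuclideanSpace ℝ (Fin n) := (WithLp.equiv 2 (Fin n → ℝ)).symm (fun i => B i j) with hx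
    have hnx : ‖x‖^2 = ∑ i, (B i j)^2 := by
      rw [EuclideanSpace.norm_eq, Real.sq_sqrt (by positivity)]
      simp [x, Real.norm_eq_abs, sq_abs]
    have happ : ∀ i, (Matrix.toEuclideanLin A x) i = (A * B) i j := by
      intro i
      rw [hx, Matrix.toEuclideanLin_apply_piLp_toLp]
      simp [Matrix.mulVec, Matrix.mul_apply, dotProduct]
    have hle : ‖Matrix.toEuclideanLin A x‖ ≤ spec A * ‖x‖ := by
      have := (LinearMap.toContinuousLinearMap (Matrix.toEuclideanLin A)).le_opNorm x
      simpa [spec] using this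
    calc ∑ i, ((A * B) i j)^2 = ‖Matrix.toEuclideanLin A x‖^2 := by
          rw [EuclideanSpace.norm_eq, Real.sq_sqrt (by positivity)]
          simp [happ, Real.norm_eq_abs, sq_abs]
      _ ≤ (spec A * ‖x‖)^2 := by
          apply pow_le_pow_left₀ (norm_nonneg _) hle
      _ = (spec A)^2 * ∑ i, (B i j)^2 := by rw [mul_pow, hnx]
  calc frob (A * B) = Real.sqrt (∑ i, ∑ j, ((A * B) i j)^2) := rfl
    _ ≤ Real.sqrt ((spec A)^2 * ∑ i, ∑ j, (B i j)^2) := Real.sqrt_le_sqrt key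
    _ = spec A * frob B := by
        rw [Real.sqrt_mul (by positivity), Real.sqrt_sq (spec_nonneg A)]; rfl

section L2

open scoped Matrix.Norms.L2Operator

lemma spec_eq_l2norm {m n : ℕ} (A : Matrix (Fin m) (Fin n) ℝ) : spec A = ‖A‖ := by
  rw [Matrix.l2_opNorm_def]; rfl

lemma spec_transpose {m n : ℕ} (A : Matrix (Fin m) (Fin n) ℝ) : spec Aᵀ = spec A := by
  rw [spec_eq_l2norm, spec_eq_l2norm]
  have : Aᵀ = Aᴴ := by ext i j; simp [Matrix.conjTranspose_apply]
  rw [this, Matrix.l2_opNorm_conjTranspose]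

lemma spec_mul_le {m n l : ℕ} (A : Matrix (Fin m) (Fin n) ℝ) (B : Matrix (Fin n) (Fin l) ℝ) :
    spec (A * B) ≤ spec A * spec B := by
  simp only [spec_eq_l2norm]
  exact Matrix.l2_opNorm_mul A B

end L2

lemma frob_mul_le_right {m n l : ℕ} (A : Matrix (Fin m) (Fin n) ℝ) (B : Matrix (Fin n) (Fin l) ℝ) :
    frob (A * B) ≤ frob A * spec B := by
  calc frob (A * B) = frob ((A * B)ᵀ) := (frob_transpose _).symm
    _ = frob (Bᵀ * Aᵀ) := by rw [Matrix.transpose_mul]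
    _ ≤ spec Bᵀ * frob Aᵀ := frob_mul_le_left _ _
    _ = frob A * spec B := by rw [spec_transpose, frob_transpose, mul_comm]

/-- Smoothness of f(U) = ‖M - U Uᵀ‖_F² on a spectral-norm ball. -/
theorem smoothness_psd {d k : ℕ} (M : Matrix (Fin d) (Fin d) ℝ) (hM : M.IsSymm)
    (U₁ U₂ : Matrix (Fin d) (Fin k) ℝ) (Γ : ℝ)
    (h1 : spec U₁ ≤ Γ) (h2 : spec U₂ ≤ Γ) :
    frob ((4:ℝ) • ((U₁ * U₁ᵀ - M) * U₁) - (4:ℝ) • ((U₂ * U₂ᵀ - M) * U₂)) ≤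
      16 * max (Γ^2) (spec M) * frob (U₁ - U₂) := by
  set Δ := U₁ - U₂ with hΔ
  have hΓ : 0 ≤ Γ := le_trans (spec_nonneg U₁) h1
  set C := max (Γ^2) (spec M) with hC
  have hCΓ : Γ^2 ≤ C := le_max_left _ _
  have hCM : spec M ≤ C := le_max_right _ _
  have hC0 : 0 ≤ C := le_trans (by positivity) hCΓ
  -- decomposition
  have hdecomp : (4:ℝ) • ((U₁ * U₁ᵀ - M) * U₁) - (4:ℝ) • ((U₂ * U₂ᵀ - M) * U₂) =
      (4:ℝ) • (Δ * U₁ᵀ * U₁ + (U₂ * Δᵀ * U₁ + (U₂ * U₂ᵀ * Δ + (-1:ℝ) • (M * Δ)))) := by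
    rw [← smul_sub]
    congr 1
    simp only [hΔ, Matrix.transpose_sub, neg_one_smul, Matrix.sub_mul, Matrix.mul_sub]
    abel
  rw [hdecomp]
  have hΔt : frob Δᵀ = frob Δ := frob_transpose Δ
  have b1 : frob (Δ * U₁ᵀ * U₁) ≤ Γ^2 * frob Δ := by
    calc frob (Δ * U₁ᵀ * U₁) ≤ frob (Δ * U₁ᵀ) * spec U₁ := frob_mul_le_right _ _
      _ ≤ frob Δ * spec U₁ᵀ * spec U₁ := by
          apply mul_le_mul_of_nonneg_right (frob_mul_le_right _ _) (spec_nonneg _)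
      _ ≤ frob Δ * Γ * Γ := by
          apply mul_le_mul (mul_le_mul_of_nonneg_left (by rw [spec_transpose]; exact h1) (frob_nonneg _)) h1 (spec_nonneg _)
          exact mul_nonneg (frob_nonneg _) hΓ
      _ = Γ^2 * frob Δ := by ring
  have b2 : frob (U₂ * Δᵀ * U₁) ≤ Γ^2 * frob Δ := by
    calc frob (U₂ * Δᵀ * U₁) ≤ frob (U₂ * Δᵀ) * spec U₁ := frob_mul_le_right _ _
      _ ≤ spec U₂ * frob Δᵀ * spec U₁ := by
          apply mul_le_mul_of_nonneg_right (frob_mul_le_left _ _) (spec_nonneg _)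
      _ ≤ Γ * frob Δ * Γ := by
          apply mul_le_mul (mul_le_mul h2 (le_of_eq hΔt) (frob_nonneg _) hΓ) h1 (spec_nonneg _)
          exact mul_nonneg hΓ (frob_nonneg _)
      _ = Γ^2 * frob Δ := by ring
  have b3 : frob (U₂ * U₂ᵀ * Δ) ≤ Γ^2 * frob Δ := by
    calc frob (U₂ * U₂ᵀ * Δ) ≤ spec (U₂ * U₂ᵀ) * frob Δ := frob_mul_le_left _ _
      _ ≤ Γ^2 * frob Δ := by
          apply mul_le_mul_of_nonneg_right _ (frob_nonneg _)
          calc spec (U₂ * U₂ᵀ) ≤ spec U₂ * spec U₂ᵀ := spec_mul_le _ _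
            _ ≤ Γ * Γ := mul_le_mul h2 (by rw [spec_transpose]; exact h2) (spec_nonneg _) hΓ
            _ = Γ^2 := (sq Γ).symm
  have b4 : frob ((-1:ℝ) • (M * Δ)) ≤ spec M * frob Δ := by
    have : frob ((-1:ℝ) • (M * Δ)) = frob (M * Δ) := by
      rw [frob, frob]; simp [neg_pow, mul_pow]
    rw [this]
    exact frob_mul_le_left _ _
  have hsum : frob (Δ * U₁ᵀ * U₁ + (U₂ * Δᵀ * U₁ + (U₂ * U₂ᵀ * Δ + (-1:ℝ) • (M * Δ)))) ≤
      4 * C * frob Δ := by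
    calc frob (Δ * U₁ᵀ * U₁ + (U₂ * Δᵀ * U₁ + (U₂ * U₂ᵀ * Δ + (-1:ℝ) • (M * Δ))))
        ≤ frob (Δ * U₁ᵀ * U₁) + (frob (U₂ * Δᵀ * U₁) + (frob (U₂ * U₂ᵀ * Δ) + frob ((-1:ℝ) • (M * Δ)))) := by
          refine le_trans (frob_add_le _ _) ?_
          gcongr
          refine le_trans (frob_add_le _ _) ?_
          gcongr
          exact frob_add_le _ _
      _ ≤ Γ^2 * frob Δ + (Γ^2 * frob Δ + (Γ^2 * frob Δ + spec M * frob Δ)) := by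
          gcongr
      _ ≤ C * frob Δ + (C * frob Δ + (C * frob Δ + C * frob Δ)) := by
          gcongr <;> first | exact frob_nonneg _ | exact hCΓ | exact hCM
      _ = 4 * C * frob Δ := by ring
  rw [frob_smul 4 (by norm_num)]
  calc 4 * frob _ ≤ 4 * (4 * C * frob Δ) := by linarith [hsum]
    _ = 16 * C * frob Δ := by ring
end

section
/- Let M be a d×d real symmetric PSD matrix of rank k. If U ∈ R^{d×k} satisfies ||M - U Uᵀ||_F ≤ σ_k(M)/10, then the smallest eigenvalue of Uᵀ U is at least (9/10) σ_k(M). -/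
open Matrix

lemma dot_self_nonneg' {n : ℕ} (v : Fin n → ℝ) : 0 ≤ v ⬝ᵥ v :=
  Finset.sum_nonneg fun i _ => mul_self_nonneg (v i)

lemma dot_self_eq_sum_sq {n : ℕ} (v : Fin n → ℝ) : v ⬝ᵥ v = ∑ j, (v j)^2 := by
  simp [dotProduct, sq]

/-- `x ⬝ᵥ (Aᵀ B) y = (A x) ⬝ᵥ (B y)` -/
lemma dot_transpose_mul {m n p : ℕ} (A : Matrix (Fin m) (Fin n) ℝ)
    (B : Matrix (Fin m) (Fin p) ℝ) (x : Fin n → ℝ) (y : Fin p → ℝ) :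
    x ⬝ᵥ ((Aᵀ * B) *ᵥ y) = (A *ᵥ x) ⬝ᵥ (B *ᵥ y) := by
  rw [← Matrix.mulVec_mulVec, Matrix.dotProduct_mulVec, Matrix.vecMul_transpose]

/-- quadratic form bounded by Frobenius norm times the squared vector norm -/
lemma quad_le_frob {d : ℕ} (E : Matrix (Fin d) (Fin d) ℝ) (v : Fin d → ℝ) :
    v ⬝ᵥ (E *ᵥ v) ≤ Real.sqrt (∑ i, ∑ j, (E i j)^2) * (∑ i, (v i)^2) := by
  have h1 : v ⬝ᵥ (E *ᵥ v) = ∑ p : Fin d × Fin d, E p.1 p.2 * (v p.1 * v p.2) := by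
    simp only [dotProduct, Matrix.mulVec, Fintype.sum_prod_type, Finset.mul_sum]
    congr 1; ext i; congr 1; ext j; ring
  have h2 : (∑ p : Fin d × Fin d, E p.1 p.2 * (v p.1 * v p.2))^2 ≤
      (∑ p : Fin d × Fin d, (E p.1 p.2)^2) * (∑ p : Fin d × Fin d, (v p.1 * v p.2)^2) :=
    Finset.sum_mul_sq_le_sq_mul_sq _ _ _
  have h3 : (∑ p : Fin d × Fin d, (v p.1 * v p.2)^2) = (∑ i, (v i)^2)^2 := by
    rw [Fintype.sum_prod_type, sq, Finset.sum_mul]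
    congr 1; ext i; rw [Finset.mul_sum]; congr 1; ext j; ring
  have h4 : (∑ p : Fin d × Fin d, (E p.1 p.2)^2) = ∑ i, ∑ j, (E i j)^2 := by
    rw [Fintype.sum_prod_type]
  have hE : (0:ℝ) ≤ ∑ i, ∑ j, (E i j)^2 := by positivity
  have hsq : Real.sqrt (∑ i, ∑ j, (E i j)^2) ^ 2 = ∑ i, ∑ j, (E i j)^2 :=
    Real.sq_sqrt hE
  have hv : (0:ℝ) ≤ ∑ i, (v i)^2 := by positivity
  rw [h1]
  have h5 : (∑ p : Fin d × Fin d, E p.1 p.2 * (v p.1 * v p.2))^2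
      ≤ (∑ i, ∑ j, (E i j)^2) * (∑ i, (v i)^2)^2 := by rw [← h3, ← h4]; exact h2
  calc (∑ p : Fin d × Fin d, E p.1 p.2 * (v p.1 * v p.2))
      ≤ |∑ p : Fin d × Fin d, E p.1 p.2 * (v p.1 * v p.2)| := le_abs_self _
    _ = Real.sqrt ((∑ p : Fin d × Fin d, E p.1 p.2 * (v p.1 * v p.2))^2) :=
        (Real.sqrt_sq_eq_abs _).symm
    _ ≤ Real.sqrt ((∑ i, ∑ j, (E i j)^2) * (∑ i, (v i)^2)^2) := Real.sqrt_le_sqrt h5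
    _ = Real.sqrt (∑ i, ∑ j, (E i j)^2) * (∑ i, (v i)^2) := by
        rw [Real.sqrt_mul hE, Real.sqrt_sq hv]

/-- In the local region, the smallest eigenvalue of Uᵀ U is at least (9/10)σ_k(M). -/
theorem local_min_eigenvalue_psd {d k : ℕ} (hk : 0 < k)
    (X : Matrix (Fin d) (Fin k) ℝ) (S : Fin k → ℝ)
    (hX : Xᵀ * X = 1) (hS : ∀ i, 0 < S i)
    (M : Matrix (Fin d) (Fin d) ℝ) (hM : M = X * Matrix.diagonal S * Xᵀ)
    (U : Matrix (Fin d) (Fin k) ℝ)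
    (hU : frob (M - U * Uᵀ) ≤ (⨅ i, S i) / 10) :
    ∀ x : Fin k → ℝ, (9/10) * (⨅ i, S i) * (∑ j, (x j)^2) ≤ x ⬝ᵥ ((Uᵀ * U) *ᵥ x) := by
  intro x
  haveI : Nonempty (Fin k) := ⟨⟨0, hk⟩⟩
  set σ : ℝ := ⨅ i, S i with hσdef
  -- basic facts about σ
  obtain ⟨i0, hi0⟩ := Finite.exists_min S
  have hσi0 : S i0 ≤ σ := le_ciInf hi0
  have hσpos : 0 < σ := lt_of_lt_of_le (hS i0) hσi0
  have hσle : ∀ i, σ ≤ S i := fun i => ciInf_le (Finite.bddBelow_range S) i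
  set E : Matrix (Fin d) (Fin d) ℝ := M - U * Uᵀ with hEdef
  -- quadratic form of E is small
  have hEq : ∀ v : Fin d → ℝ, v ⬝ᵥ (E *ᵥ v) ≤ σ/10 * (v ⬝ᵥ v) := by
    intro v
    have h1 := quad_le_frob E v
    have h2 : Real.sqrt (∑ i, ∑ j, (E i j)^2) ≤ σ/10 := hU
    have hv : (0:ℝ) ≤ ∑ i, (v i)^2 := by positivity
    calc v ⬝ᵥ (E *ᵥ v) ≤ Real.sqrt (∑ i, ∑ j, (E i j)^2) * (∑ i, (v i)^2) := h1
      _ ≤ σ/10 * (∑ i, (v i)^2) := by nlinarith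
      _ = σ/10 * (v ⬝ᵥ v) := by rw [dot_self_eq_sum_sq]
  -- X preserves norms
  have hXnorm : ∀ y : Fin k → ℝ, (X *ᵥ y) ⬝ᵥ (X *ᵥ y) = y ⬝ᵥ y := by
    intro y
    rw [← dot_transpose_mul X X y y, hX, Matrix.one_mulVec]
  -- Xᵀ is a contraction
  have hXcontr : ∀ w : Fin d → ℝ, (Xᵀ *ᵥ w) ⬝ᵥ (Xᵀ *ᵥ w) ≤ w ⬝ᵥ w := by
    intro w
    set z : Fin k → ℝ := Xᵀ *ᵥ w with hz
    have h1 : w ⬝ᵥ (X *ᵥ z) = z ⬝ᵥ z := by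
      rw [Matrix.dotProduct_mulVec, ← Matrix.mulVec_transpose]
    have h2 : (w ⬝ᵥ (X *ᵥ z))^2 ≤ (w ⬝ᵥ w) * ((X *ᵥ z) ⬝ᵥ (X *ᵥ z)) := by
      have := Finset.sum_mul_sq_le_sq_mul_sq Finset.univ w (X *ᵥ z)
      simpa [dotProduct, sq, mul_pow] using this
    rw [hXnorm z, h1] at h2
    have hzz := dot_self_nonneg' z
    have hww := dot_self_nonneg' w
    nlinarith
  -- Xᵀ M X = diagonal S
  have hXMX : Xᵀ * M * X = Matrix.diagonal S := by
    rw [hM]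
    rw [show Xᵀ * (X * Matrix.diagonal S * Xᵀ) * X
        = (Xᵀ * X) * Matrix.diagonal S * (Xᵀ * X) by
      simp only [Matrix.mul_assoc]]
    rw [hX, Matrix.one_mul, Matrix.mul_one]
  set A : Matrix (Fin k) (Fin k) ℝ := Uᵀ * X with hA
  -- key lower bound on ‖A y‖²
  have hB : ∀ y : Fin k → ℝ, 9/10 * σ * (y ⬝ᵥ y) ≤ (A *ᵥ y) ⬝ᵥ (A *ᵥ y) := by
    intro y
    set v : Fin d → ℝ := X *ᵥ y with hv
    have e1 : (A *ᵥ y) ⬝ᵥ (A *ᵥ y) = v ⬝ᵥ ((U * Uᵀ) *ᵥ v) := by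
      have : A *ᵥ y = Uᵀ *ᵥ v := by rw [hA, ← Matrix.mulVec_mulVec]
      rw [this, ← dot_transpose_mul Uᵀ Uᵀ v v, Matrix.transpose_transpose]
    have e2 : v ⬝ᵥ (M *ᵥ v) = y ⬝ᵥ (Matrix.diagonal S *ᵥ y) := by
      rw [hv, Matrix.mulVec_mulVec, ← dot_transpose_mul X (M * X) y y,
        ← Matrix.mul_assoc, hXMX]
    have e3 : y ⬝ᵥ (Matrix.diagonal S *ᵥ y) = ∑ i, S i * (y i)^2 := by
      simp [dotProduct, Matrix.mulVec_diagonal, sq]; congr 1; ext i; ring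
    have e4 : σ * (y ⬝ᵥ y) ≤ y ⬝ᵥ (Matrix.diagonal S *ᵥ y) := by
      rw [e3, dot_self_eq_sum_sq, Finset.mul_sum]
      apply Finset.sum_le_sum
      intro i _
      have := hσle i
      nlinarith [sq_nonneg (y i)]
    have e5 : v ⬝ᵥ (E *ᵥ v) ≤ σ/10 * (y ⬝ᵥ y) := by
      have := hEq v
      rwa [hv, hXnorm y] at this
    have e6 : v ⬝ᵥ ((U * Uᵀ) *ᵥ v) = v ⬝ᵥ (M *ᵥ v) - v ⬝ᵥ (E *ᵥ v) := by
      rw [hEdef, Matrix.sub_mulVec, dotProduct_sub]; ring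
    rw [e1, e6]
    linarith
  -- A is injective hence surjective
  have hAinj : Function.Injective (Matrix.mulVecLin A) := by
    rw [← LinearMap.ker_eq_bot]
    rw [Submodule.eq_bot_iff]
    intro y hy
    rw [LinearMap.mem_ker, Matrix.mulVecLin_apply] at hy
    have h1 := hB y
    rw [hy] at h1
    simp only [dotProduct_zero] at h1
    have h2 : y ⬝ᵥ y ≤ 0 := by nlinarith [dot_self_nonneg' y]
    have h3 : y ⬝ᵥ y = 0 := le_antisymm h2 (dot_self_nonneg' y)
    funext i
    by_contra hne
    have hne' : y i ≠ 0 := by simpa using hne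
    have : 0 < y ⬝ᵥ y :=
      Finset.sum_pos' (fun j _ => mul_self_nonneg (y j))
        ⟨i, Finset.mem_univ i, mul_self_pos.mpr hne'⟩
    linarith
  have hAsurj : Function.Surjective (Matrix.mulVecLin A) :=
    LinearMap.injective_iff_surjective.mp hAinj
  obtain ⟨y, hy⟩ := hAsurj x
  rw [Matrix.mulVecLin_apply] at hy
  -- B = Aᵀ A, C = B - c • 1
  set c : ℝ := 9/10 * σ with hc
  set B : Matrix (Fin k) (Fin k) ℝ := Aᵀ * A with hBdef
  have hBy : ∀ z : Fin k → ℝ, z ⬝ᵥ (B *ᵥ z) = (A *ᵥ z) ⬝ᵥ (A *ᵥ z) := fun z =>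
    dot_transpose_mul A A z z
  set C : Matrix (Fin k) (Fin k) ℝ := B - c • (1 : Matrix (Fin k) (Fin k) ℝ) with hCdef
  have hCmul : ∀ z : Fin k → ℝ, C *ᵥ z = B *ᵥ z - c • z := by
    intro z
    rw [hCdef, Matrix.sub_mulVec, Matrix.smul_mulVec, Matrix.one_mulVec]
  have hCpos : ∀ z : Fin k → ℝ, 0 ≤ z ⬝ᵥ (C *ᵥ z) := by
    intro z
    rw [hCmul z, dotProduct_sub, dotProduct_smul]
    have h1 := hB z
    rw [← hBy z] at h1
    simp only [smul_eq_mul]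
    linarith
  -- ‖B y‖² ≥ c * (y ⬝ᵥ B y)
  have hkey : c * (y ⬝ᵥ (B *ᵥ y)) ≤ (B *ᵥ y) ⬝ᵥ (B *ᵥ y) := by
    have hBC : B *ᵥ y = C *ᵥ y + c • y := by rw [hCmul]; ring
    have expand : (B *ᵥ y) ⬝ᵥ (B *ᵥ y)
        = (C *ᵥ y) ⬝ᵥ (C *ᵥ y) + 2 * c * (y ⬝ᵥ (C *ᵥ y)) + c^2 * (y ⬝ᵥ y) := by
      rw [hBC, dotProduct_add, add_dotProduct, add_dotProduct, dotProduct_smul,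
        smul_dotProduct, smul_dotProduct, dotProduct_smul]
      simp only [smul_eq_mul]
      rw [dotProduct_comm (C *ᵥ y) y]
      ring
    have expand2 : y ⬝ᵥ (B *ᵥ y) = y ⬝ᵥ (C *ᵥ y) + c * (y ⬝ᵥ y) := by
      rw [hBC, dotProduct_add, dotProduct_smul]; simp only [smul_eq_mul]
    rw [expand, expand2]
    have h1 := hCpos y
    have h2 := dot_self_nonneg' (C *ᵥ y)
    have hcpos : 0 < c := by rw [hc]; linarith
    nlinarith
  -- conclude
  have hAty : Aᵀ *ᵥ x = B *ᵥ y := by rw [← hy, Matrix.mulVec_mulVec, hBdef]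
  have step1 : c * (∑ j, (x j)^2) ≤ (Aᵀ *ᵥ x) ⬝ᵥ (Aᵀ *ᵥ x) := by
    rw [hAty, ← dot_self_eq_sum_sq, ← hy, ← hBy y]
    exact hkey
  have step2 : (Aᵀ *ᵥ x) ⬝ᵥ (Aᵀ *ᵥ x) ≤ x ⬝ᵥ ((Uᵀ * U) *ᵥ x) := by
    have h1 : Aᵀ *ᵥ x = Xᵀ *ᵥ (U *ᵥ x) := by
      rw [hA, Matrix.transpose_mul, Matrix.transpose_transpose,
        ← Matrix.mulVec_mulVec]
    have h2 : x ⬝ᵥ ((Uᵀ * U) *ᵥ x) = (U *ᵥ x) ⬝ᵥ (U *ᵥ x) :=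
      dot_transpose_mul U U x x
    rw [h1, h2]
    exact hXcontr (U *ᵥ x)
  calc (9/10) * σ * (∑ j, (x j)^2) = c * (∑ j, (x j)^2) := by rw [hc]
    _ ≤ (Aᵀ *ᵥ x) ⬝ᵥ (Aᵀ *ᵥ x) := step1
    _ ≤ x ⬝ᵥ ((Uᵀ * U) *ᵥ x) := step2
end

section
/- Let M ∈ R^{d₁×d₂} be rank k, and suppose U ∈ R^{d₁×k}, V ∈ R^{d₂×k} are balanced factors, i.e., U = W_U D^{1/2} and V = W_V D^{1/2} where W_U D W_Vᵀ is the SVD of U Vᵀ. If ||M - U Vᵀ||_F ≤ σ_k(M)/10, then ||U||² ≤ 2||M|| and ||V||² ≤ 2||M||, and σ_min(Uᵀ U) ≥ (9/10)σ_k(M). -/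
open Matrix

/-- sum of squares -/
noncomputable def qs {n : ℕ} (v : Fin n → ℝ) : ℝ := ∑ i, (v i)^2

lemma qs_nonneg {n : ℕ} (v : Fin n → ℝ) : 0 ≤ qs v :=
  Finset.sum_nonneg fun i _ => sq_nonneg _

lemma qs_eq_dot {n : ℕ} (v : Fin n → ℝ) : qs v = v ⬝ᵥ v := by
  simp [qs, dotProduct, sq]

lemma qs_mulVec {m n : ℕ} (A : Matrix (Fin m) (Fin n) ℝ) (x : Fin n → ℝ) :
    qs (A *ᵥ x) = x ⬝ᵥ ((Aᵀ * A) *ᵥ x) := by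
  rw [qs_eq_dot, Matrix.dotProduct_mulVec, ← Matrix.mulVec_transpose, Matrix.mulVec_mulVec,
    dotProduct_comm]

lemma euclid_norm {n : ℕ} (x : EuclideanSpace ℝ (Fin n)) :
    ‖x‖ = Real.sqrt (qs (fun i => x i)) := by
  rw [EuclideanSpace.norm_eq]; congr 1
  apply Finset.sum_congr rfl; intros; rw [Real.norm_eq_abs, sq_abs]

lemma norm_toEuclideanLin {m n : ℕ} (A : Matrix (Fin m) (Fin n) ℝ)
    (x : EuclideanSpace ℝ (Fin n)) :
    ‖Matrix.toEuclideanLin A x‖ = Real.sqrt (qs (A *ᵥ (fun j => x j))) := by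
  rw [euclid_norm]; rfl

lemma sqrt_qs_mulVec_le {m n : ℕ} (A : Matrix (Fin m) (Fin n) ℝ) (x : Fin n → ℝ) :
    Real.sqrt (qs (A *ᵥ x)) ≤ spec A * Real.sqrt (qs x) := by
  have h := (LinearMap.toContinuousLinearMap (Matrix.toEuclideanLin A)).le_opNorm
      ((WithLp.equiv 2 (Fin n → ℝ)).symm x)
  have h1 : ‖(LinearMap.toContinuousLinearMap (Matrix.toEuclideanLin A))
      ((WithLp.equiv 2 (Fin n → ℝ)).symm x)‖ = Real.sqrt (qs (A *ᵥ x)) := by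
    rw [LinearMap.coe_toContinuousLinearMap']; exact norm_toEuclideanLin A _
  have h2 : ‖(WithLp.equiv 2 (Fin n → ℝ)).symm x‖ = Real.sqrt (qs x) := euclid_norm _
  rw [h1, h2] at h; exact h

lemma qs_mulVec_le {m n : ℕ} (A : Matrix (Fin m) (Fin n) ℝ) (x : Fin n → ℝ) :
    qs (A *ᵥ x) ≤ (spec A)^2 * qs x := by
  have h := sqrt_qs_mulVec_le A x
  have := Real.sqrt_nonneg (qs (A *ᵥ x))
  nlinarith [Real.sq_sqrt (qs_nonneg (A *ᵥ x)), Real.sq_sqrt (qs_nonneg x),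
    Real.sqrt_nonneg (qs x), spec_nonneg A]

lemma spec_le_of_bound {m n : ℕ} (A : Matrix (Fin m) (Fin n) ℝ) (C : ℝ) (hC : 0 ≤ C)
    (h : ∀ x : Fin n → ℝ, qs (A *ᵥ x) ≤ C^2 * qs x) : spec A ≤ C := by
  apply ContinuousLinearMap.opNorm_le_bound _ hC
  intro x
  rw [LinearMap.coe_toContinuousLinearMap', norm_toEuclideanLin, euclid_norm]
  have h1 := h (fun j => x j)
  calc Real.sqrt (qs (A *ᵥ fun j => x j)) ≤ Real.sqrt (C^2 * qs (fun j => x j)) :=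
        Real.sqrt_le_sqrt h1
    _ = C * Real.sqrt (qs fun j => x j) := by
        rw [Real.sqrt_mul (sq_nonneg C), Real.sqrt_sq hC]

lemma le_spec_of_vec {m n : ℕ} (A : Matrix (Fin m) (Fin n) ℝ) (c : ℝ) (hc : 0 ≤ c)
    (x : Fin n → ℝ) (hx : qs x = 1) (h : c^2 ≤ qs (A *ᵥ x)) : c ≤ spec A := by
  have h2 := qs_mulVec_le A x
  rw [hx, mul_one] at h2
  nlinarith [spec_nonneg A]

lemma spec_le_frob {m n : ℕ} (A : Matrix (Fin m) (Fin n) ℝ) : spec A ≤ frob A := by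
  apply spec_le_of_bound _ _ (Real.sqrt_nonneg _)
  intro x
  show qs (A *ᵥ x) ≤ Real.sqrt (∑ i, ∑ j, (A i j)^2) ^ 2 * qs x
  rw [Real.sq_sqrt (by positivity)]
  rw [qs, Finset.sum_mul]
  apply Finset.sum_le_sum
  intro i _
  calc ((A *ᵥ x) i)^2 = (∑ j, A i j * x j)^2 := by rfl
    _ ≤ (∑ j, (A i j)^2) * ∑ j, (x j)^2 := Finset.sum_mul_sq_le_sq_mul_sq _ _ _
    _ = (∑ j, (A i j)^2) * qs x := rfl

lemma spec_sub_le {m n : ℕ} (A B : Matrix (Fin m) (Fin n) ℝ) :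
    spec A ≤ spec B + spec (A - B) := by
  unfold spec
  have : A = B + (A - B) := by abel
  calc ‖LinearMap.toContinuousLinearMap (Matrix.toEuclideanLin A)‖
      = ‖LinearMap.toContinuousLinearMap (Matrix.toEuclideanLin B)
        + LinearMap.toContinuousLinearMap (Matrix.toEuclideanLin (A - B))‖ := by
        rw [← map_add, ← map_add, ← this]
    _ ≤ _ := norm_add_le _ _

lemma spec_neg {m n : ℕ} (A : Matrix (Fin m) (Fin n) ℝ) : spec (-A) = spec A := by
  unfold spec; rw [map_neg, map_neg, norm_neg]

lemma qs_orth_mulVec {m k : ℕ} (W : Matrix (Fin m) (Fin k) ℝ) (hW : Wᵀ * W = 1)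
    (z : Fin k → ℝ) : qs (W *ᵥ z) = qs z := by
  rw [qs_mulVec, hW, Matrix.one_mulVec, ← qs_eq_dot]

lemma qs_orthT_mulVec_le {m k : ℕ} (W : Matrix (Fin m) (Fin k) ℝ) (hW : Wᵀ * W = 1)
    (x : Fin m → ℝ) : qs (Wᵀ *ᵥ x) ≤ qs x := by
  -- ‖Wᵀx‖² = x ⬝ (W Wᵀ x) ≤ ‖x‖ ‖W Wᵀ x‖ = ‖x‖ ‖Wᵀ x‖
  have h1 : qs (Wᵀ *ᵥ x) = x ⬝ᵥ (W *ᵥ (Wᵀ *ᵥ x)) := by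
    rw [qs_mulVec, Matrix.transpose_transpose, Matrix.mulVec_mulVec]
  have h2 : qs (W *ᵥ (Wᵀ *ᵥ x)) = qs (Wᵀ *ᵥ x) := qs_orth_mulVec W hW _
  have hcs : (x ⬝ᵥ (W *ᵥ (Wᵀ *ᵥ x)))^2 ≤ qs x * qs (W *ᵥ (Wᵀ *ᵥ x)) := by
    simpa [qs, dotProduct] using
      Finset.sum_mul_sq_le_sq_mul_sq Finset.univ x (W *ᵥ (Wᵀ *ᵥ x))
  rw [h2, ← h1] at hcs
  nlinarith [qs_nonneg (Wᵀ *ᵥ x), qs_nonneg x]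

lemma qs_diag_mulVec {k : ℕ} (d x : Fin k → ℝ) :
    qs ((Matrix.diagonal d) *ᵥ x) = ∑ j, (d j)^2 * (x j)^2 := by
  unfold qs
  apply Finset.sum_congr rfl
  intro j _
  rw [Matrix.mulVec_diagonal]; ring

lemma qs_single {k : ℕ} (j : Fin k) (a : ℝ) : qs (Pi.single j a : Fin k → ℝ) = a^2 := by
  simp [qs, Pi.single_apply]

lemma diag_single {k : ℕ} (d : Fin k → ℝ) (j : Fin k) :
    (Matrix.diagonal d) *ᵥ (Pi.single j 1 : Fin k → ℝ) = Pi.single j (d j) := by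
  funext i
  rw [Matrix.mulVec_diagonal]
  by_cases h : i = j <;> simp [h, Pi.single_apply]

lemma gram_eq {m k : ℕ} (W : Matrix (Fin m) (Fin k) ℝ) (s : Fin k → ℝ) (hW : Wᵀ * W = 1) :
    (W * Matrix.diagonal s)ᵀ * (W * Matrix.diagonal s) = Matrix.diagonal (fun j => (s j)^2) := by
  rw [Matrix.transpose_mul, Matrix.diagonal_transpose, Matrix.mul_assoc,
    ← Matrix.mul_assoc Wᵀ W, hW, Matrix.one_mul, Matrix.diagonal_mul_diagonal]
  congr 1; funext j; ring

lemma prod_eq {d₁ d₂ k : ℕ} (WU : Matrix (Fin d₁) (Fin k) ℝ) (WV : Matrix (Fin d₂) (Fin k) ℝ)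
    (s : Fin k → ℝ) :
    (WU * Matrix.diagonal s) * (WV * Matrix.diagonal s)ᵀ
      = WU * Matrix.diagonal (fun j => (s j)^2) * WVᵀ := by
  rw [Matrix.transpose_mul, Matrix.diagonal_transpose]
  simp only [Matrix.mul_assoc]
  congr 1
  rw [← Matrix.mul_assoc, Matrix.diagonal_mul_diagonal]
  congr 1
  funext j; ring

lemma sandwich {a b k : ℕ} (A : Matrix (Fin a) (Fin k) ℝ) (d : Fin k → ℝ)
    (B : Matrix (Fin b) (Fin k) ℝ) (hB : Bᵀ * B = 1) (z : Fin k → ℝ) :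
    (A * Matrix.diagonal d * Bᵀ) *ᵥ (B *ᵥ z) = A *ᵥ ((Matrix.diagonal d) *ᵥ z) := by
  rw [Matrix.mulVec_mulVec, Matrix.mul_assoc (A * Matrix.diagonal d) Bᵀ B, hB,
    Matrix.mul_one, ← Matrix.mulVec_mulVec]

lemma dot_diag {k : ℕ} (d x : Fin k → ℝ) :
    x ⬝ᵥ ((Matrix.diagonal d) *ᵥ x) = ∑ j, d j * (x j)^2 := by
  simp only [dotProduct, Matrix.mulVec_diagonal]
  apply Finset.sum_congr rfl; intros; ring

lemma sqrt_qs_triangle {n : ℕ} (u v : Fin n → ℝ) :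
    Real.sqrt (qs u) ≤ Real.sqrt (qs v) + Real.sqrt (qs (u - v)) := by
  have h1 : ‖(WithLp.equiv 2 (Fin n → ℝ)).symm u‖ = Real.sqrt (qs u) := euclid_norm _
  have h2 : ‖(WithLp.equiv 2 (Fin n → ℝ)).symm v‖ = Real.sqrt (qs v) := euclid_norm _
  have h3 : ‖(WithLp.equiv 2 (Fin n → ℝ)).symm u - (WithLp.equiv 2 (Fin n → ℝ)).symm v‖
      = Real.sqrt (qs (u - v)) := euclid_norm _
  have h4 := norm_sub_norm_le ((WithLp.equiv 2 (Fin n → ℝ)).symm u)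
    ((WithLp.equiv 2 (Fin n → ℝ)).symm v)
  rw [h1, h2, h3] at h4
  linarith

/-- Local spectral bounds for balanced factors in the asymmetric case. -/
theorem local_guarantee_asym {d₁ d₂ k : ℕ} (hk : 0 < k)
    (X : Matrix (Fin d₁) (Fin k) ℝ) (Y : Matrix (Fin d₂) (Fin k) ℝ) (S : Fin k → ℝ)
    (hX : Xᵀ * X = 1) (hY : Yᵀ * Y = 1) (hS : ∀ i, 0 < S i)
    (M : Matrix (Fin d₁) (Fin d₂) ℝ) (hM : M = X * Matrix.diagonal S * Yᵀ)
    (WU : Matrix (Fin d₁) (Fin k) ℝ) (WV : Matrix (Fin d₂) (Fin k) ℝ) (s : Fin k → ℝ)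
    (hWU : WUᵀ * WU = 1) (hWV : WVᵀ * WV = 1) (hs : ∀ i, 0 ≤ s i)
    (U : Matrix (Fin d₁) (Fin k) ℝ) (V : Matrix (Fin d₂) (Fin k) ℝ)
    (hU : U = WU * Matrix.diagonal s) (hV : V = WV * Matrix.diagonal s)
    (hclose : frob (M - U * Vᵀ) ≤ (⨅ i, S i) / 10) :
    (spec U)^2 ≤ 2 * spec M ∧ (spec V)^2 ≤ 2 * spec M ∧
      ∀ x : Fin k → ℝ, (9/10) * (⨅ i, S i) * (∑ j, (x j)^2) ≤ x ⬝ᵥ ((Uᵀ * U) *ᵥ x) := by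
  haveI : Nonempty (Fin k) := ⟨⟨0, hk⟩⟩
  obtain ⟨i0, hi0⟩ := Finite.exists_min S
  set σ := ⨅ i, S i with hσdef
  have hσle : ∀ i, σ ≤ S i := fun i => ciInf_le (Set.Finite.bddBelow (Set.finite_range S)) i
  have hσ_eq : σ = S i0 := le_antisymm (hσle i0) (le_ciInf hi0)
  have hσpos : 0 < σ := hσ_eq ▸ hS i0
  have hfrob0 : 0 ≤ frob (M - U * Vᵀ) := Real.sqrt_nonneg _
  -- structure
  have hUtU : Uᵀ * U = Matrix.diagonal (fun j => (s j)^2) := by rw [hU]; exact gram_eq WU s hWU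
  have hVtV : Vᵀ * V = Matrix.diagonal (fun j => (s j)^2) := by rw [hV]; exact gram_eq WV s hWV
  have hUV : U * Vᵀ = WU * Matrix.diagonal (fun j => (s j)^2) * WVᵀ := by
    rw [hU, hV]; exact prod_eq WU WV s
  -- σ ≤ spec M
  have hspecM : σ ≤ spec M := by
    apply le_spec_of_vec M σ hσpos.le (Y *ᵥ (Pi.single i0 1 : Fin k → ℝ))
    · rw [qs_orth_mulVec Y hY, qs_single]; norm_num
    · rw [hM, sandwich X S Y hY, diag_single, qs_orth_mulVec X hX, qs_single, hσ_eq]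
  -- s j ^ 2 ≤ spec (U Vᵀ)
  have hsj : ∀ j, (s j)^2 ≤ spec (U * Vᵀ) := by
    intro j
    apply le_spec_of_vec _ _ (sq_nonneg (s j)) (WV *ᵥ (Pi.single j 1 : Fin k → ℝ))
    · rw [qs_orth_mulVec WV hWV, qs_single]; norm_num
    · rw [hUV, sandwich WU _ WV hWV, diag_single, qs_orth_mulVec WU hWU, qs_single]
  have hspecUV : spec (U * Vᵀ) ≤ spec M + frob (M - U * Vᵀ) := by
    have h1 := spec_sub_le (U * Vᵀ) M
    have h2 : spec (U * Vᵀ - M) = spec (M - U * Vᵀ) := by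
      rw [← spec_neg (M - U * Vᵀ), neg_sub]
    have h3 := spec_le_frob (M - U * Vᵀ)
    linarith
  have hs2 : ∀ j, (s j)^2 ≤ 2 * spec M := by
    intro j
    have := hsj j
    linarith
  have hspecM0 : 0 ≤ spec M := spec_nonneg M
  -- spec U, spec V bounds
  have specsq : ∀ (m : ℕ) (A : Matrix (Fin m) (Fin k) ℝ),
      Aᵀ * A = Matrix.diagonal (fun j => (s j)^2) → (spec A)^2 ≤ 2 * spec M := by
    intro m A hA
    have hspecA : spec A ≤ Real.sqrt (2 * spec M) := by
      apply spec_le_of_bound _ _ (Real.sqrt_nonneg _)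
      intro x
      rw [Real.sq_sqrt (by linarith : (0:ℝ) ≤ 2 * spec M), qs_mulVec, hA, dot_diag]
      calc ∑ j, (s j)^2 * (x j)^2 ≤ ∑ j, (2 * spec M) * (x j)^2 :=
            Finset.sum_le_sum fun j _ => mul_le_mul_of_nonneg_right (hs2 j) (sq_nonneg _)
        _ = (2 * spec M) * qs x := by rw [qs, Finset.mul_sum]
    have := pow_le_pow_left₀ (spec_nonneg A) hspecA 2
    rwa [Real.sq_sqrt (by linarith : (0:ℝ) ≤ 2 * spec M)] at this
  -- the min singular value bound
  have key : ∀ j, (9/10) * σ ≤ (s j)^2 := by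
    by_contra hcon
    push_neg at hcon
    obtain ⟨j0, hj0⟩ := hcon
    set Bs := Finset.univ.filter (fun j => (s j)^2 < (9/10) * σ) with hBs
    have hj0B : j0 ∈ Bs := by simp [hBs, hj0]
    have hBne : Bs.Nonempty := ⟨j0, hj0B⟩
    set β := Bs.sup' hBne (fun j => (s j)^2) with hβ
    have hβlt : β < (9/10) * σ := by
      rw [hβ]
      apply (Finset.sup'_lt_iff hBne).mpr
      intro j hj
      simpa [hBs] using hj
    have hβ0 : 0 ≤ β :=
      le_trans (sq_nonneg (s j0)) (Finset.le_sup' (fun j => (s j)^2) hj0B)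
    set L := Finset.univ.filter (fun j => β < (s j)^2) with hL
    have hj0L : j0 ∉ L := by
      simp only [hL, Finset.mem_filter, Finset.mem_univ, true_and, not_lt]
      exact Finset.le_sup' (fun j => (s j)^2) hj0B
    have hLcard : L.card < k := by
      have hne : L ≠ Finset.univ := fun h => hj0L (h ▸ Finset.mem_univ j0)
      have := (Finset.card_lt_iff_ne_univ L).mpr hne
      simpa using this
    let f : (Fin k → ℝ) →ₗ[ℝ] (↥L → ℝ) :=
      { toFun := fun z j => (WVᵀ *ᵥ (Y *ᵥ z)) (j : Fin k)
        map_add' := by intro a b; funext j; simp [Matrix.mulVec_add]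
        map_smul' := by intro cc a; funext j; simp [Matrix.mulVec_smul] }
    have hfni : ¬ Function.Injective f := by
      intro hf
      have h1 := LinearMap.finrank_le_finrank_of_injective hf
      have h2 : Module.finrank ℝ (Fin k → ℝ) = k := by simp
      have h3 : Module.finrank ℝ (↥L → ℝ) = L.card := by simp [Module.finrank_pi]
      rw [h2, h3] at h1
      omega
    rw [Function.not_injective_iff] at hfni
    obtain ⟨a, b, hab, habne⟩ := hfni
    set z := a - b with hz
    have hz0 : z ≠ 0 := sub_ne_zero.mpr habne
    have hfz : f z = 0 := by rw [hz, map_sub, hab, sub_self]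
    have hqz : 0 < qs z := by
      obtain ⟨j, hj⟩ := Function.ne_iff.mp hz0
      refine Finset.sum_pos' (fun i _ => sq_nonneg _) ⟨j, Finset.mem_univ j, ?_⟩
      have : z j ≠ 0 := hj
      positivity
    set x := Y *ᵥ z with hx
    set c := WVᵀ *ᵥ x with hc
    have hcL : ∀ j, j ∈ L → c j = 0 := fun j hj => congrFun hfz ⟨j, hj⟩
    have hqx : qs x = qs z := qs_orth_mulVec Y hY z
    have hMx : σ^2 * qs z ≤ qs (M *ᵥ x) := by
      rw [hx, hM, sandwich X S Y hY, qs_orth_mulVec X hX, qs_diag_mulVec, qs, Finset.mul_sum]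
      apply Finset.sum_le_sum
      intro j _
      have h5 : σ^2 ≤ (S j)^2 := pow_le_pow_left₀ hσpos.le (hσle j) 2
      exact mul_le_mul_of_nonneg_right h5 (sq_nonneg _)
    have hNx : qs ((U * Vᵀ) *ᵥ x) ≤ β^2 * qs z := by
      have e1 : (U * Vᵀ) *ᵥ x = WU *ᵥ ((Matrix.diagonal (fun j => (s j)^2)) *ᵥ c) := by
        rw [hUV, hc, ← Matrix.mulVec_mulVec, ← Matrix.mulVec_mulVec]
      rw [e1, qs_orth_mulVec WU hWU, qs_diag_mulVec]
      have step : ∑ j, ((fun j => (s j)^2) j)^2 * (c j)^2 ≤ ∑ j, β^2 * (c j)^2 := by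
        apply Finset.sum_le_sum
        intro j _
        by_cases hjL : j ∈ L
        · rw [hcL j hjL]; simp
        · have h6 : (s j)^2 ≤ β := by simpa [hL] using hjL
          have h7 : ((s j)^2)^2 ≤ β^2 := pow_le_pow_left₀ (sq_nonneg _) h6 2
          exact mul_le_mul_of_nonneg_right h7 (sq_nonneg _)
      have h8 : qs c ≤ qs z := le_of_le_of_eq (qs_orthT_mulVec_le WV hWV x) hqx
      calc ∑ j, ((fun j => (s j)^2) j)^2 * (c j)^2 ≤ ∑ j, β^2 * (c j)^2 := step
        _ = β^2 * qs c := by rw [qs, Finset.mul_sum]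
        _ ≤ β^2 * qs z := mul_le_mul_of_nonneg_left h8 (sq_nonneg β)
    have t1 : σ * Real.sqrt (qs z) ≤ Real.sqrt (qs (M *ᵥ x)) := by
      have h9 := Real.sqrt_le_sqrt hMx
      rwa [Real.sqrt_mul (sq_nonneg σ), Real.sqrt_sq hσpos.le] at h9
    have t2 : Real.sqrt (qs ((U * Vᵀ) *ᵥ x)) ≤ β * Real.sqrt (qs z) := by
      have h9 := Real.sqrt_le_sqrt hNx
      rwa [Real.sqrt_mul (sq_nonneg β), Real.sqrt_sq hβ0] at h9
    have t3 : Real.sqrt (qs ((M - U * Vᵀ) *ᵥ x)) ≤ (σ/10) * Real.sqrt (qs z) := by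
      calc Real.sqrt (qs ((M - U * Vᵀ) *ᵥ x))
          ≤ spec (M - U * Vᵀ) * Real.sqrt (qs x) := sqrt_qs_mulVec_le _ _
        _ ≤ (σ/10) * Real.sqrt (qs z) := by
            rw [hqx]
            exact mul_le_mul_of_nonneg_right (le_trans (spec_le_frob _) hclose)
              (Real.sqrt_nonneg _)
    have t4 : Real.sqrt (qs (M *ᵥ x))
        ≤ Real.sqrt (qs ((U * Vᵀ) *ᵥ x)) + Real.sqrt (qs ((M - U * Vᵀ) *ᵥ x)) := by
      have h9 := sqrt_qs_triangle (M *ᵥ x) ((U * Vᵀ) *ᵥ x)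
      rwa [← Matrix.sub_mulVec] at h9
    have hsq : 0 < Real.sqrt (qs z) := Real.sqrt_pos.mpr hqz
    nlinarith [t1, t2, t3, t4, hβlt, hsq]
  refine ⟨specsq d₁ U hUtU, specsq d₂ V hVtV, ?_⟩
  intro x
  rw [hUtU, dot_diag]
  calc (9/10) * σ * (∑ j, (x j)^2) = ∑ j, (9/10) * σ * (x j)^2 := by rw [Finset.mul_sum]
    _ ≤ ∑ j, (s j)^2 * (x j)^2 :=
        Finset.sum_le_sum fun j _ => mul_le_mul_of_nonneg_right (key j) (sq_nonneg _)
end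

section
/- Let M ∈ R^{d×d} be symmetric PSD with rank-k eigendecomposition M = X S Xᵀ (X orthonormal columns), μ(X) ≤ μ, and let U ∈ R^{d×k} with top-k left singular vector matrix W (orthonormal columns) of U Uᵀ satisfying μ(W) ≤ μ' (i.e. max_i ||eᵢᵀW||² ≤ μ'k/d). Then ||U Uᵀ - M||_∞ ≤ (sqrt(μk/d) + sqrt(μ'k/d)) ||U Uᵀ - M||_F. -/
open Matrix

private lemma cs_abs {n : ℕ} (f g : Fin n → ℝ) :
    |∑ a, f a * g a| ≤ Real.sqrt (∑ a, (f a)^2) * Real.sqrt (∑ a, (g a)^2) := by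
  have h := Finset.sum_mul_sq_le_sq_mul_sq Finset.univ f g
  have := Real.sqrt_le_sqrt h
  rwa [Real.sqrt_sq_eq_abs, Real.sqrt_mul (by positivity)] at this

private lemma proj_contract {d : ℕ} (P : Matrix (Fin d) (Fin d) ℝ)
    (hs : Pᵀ = P) (hi : P * P = P) (c : Fin d → ℝ) :
    ∑ l, (P.mulVec c l)^2 ≤ ∑ l, (c l)^2 := by
  set q := P.mulVec c with hq
  have hqq : ∑ l, (q l)^2 = ∑ l, c l * q l := by
    have h1 : q ⬝ᵥ q = c ⬝ᵥ q := by
      calc q ⬝ᵥ q = q ⬝ᵥ P.mulVec c := rfl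
        _ = (q ᵥ* P) ⬝ᵥ c := Matrix.dotProduct_mulVec q P c
        _ = (Pᵀ.mulVec q) ⬝ᵥ c := by rw [Matrix.mulVec_transpose]
        _ = (P.mulVec q) ⬝ᵥ c := by rw [hs]
        _ = ((P * P).mulVec c) ⬝ᵥ c := by rw [hq, ← Matrix.mulVec_mulVec]
        _ = q ⬝ᵥ c := by rw [hi]
        _ = c ⬝ᵥ q := dotProduct_comm q c
    simpa [dotProduct, sq] using h1
  have hcs : |∑ l, c l * q l| ≤ Real.sqrt (∑ l, (c l)^2) * Real.sqrt (∑ l, (q l)^2) :=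
    cs_abs c q
  have h2 : ∑ l, (q l)^2 ≤ Real.sqrt (∑ l, (c l)^2) * Real.sqrt (∑ l, (q l)^2) := by
    calc ∑ l, (q l)^2 = ∑ l, c l * q l := hqq
      _ ≤ |∑ l, c l * q l| := le_abs_self _
      _ ≤ _ := hcs
  have hA : Real.sqrt (∑ l, (q l)^2) ^ 2 = ∑ l, (q l)^2 := Real.sq_sqrt (by positivity)
  have hB : Real.sqrt (∑ l, (c l)^2) ^ 2 = ∑ l, (c l)^2 := Real.sq_sqrt (by positivity)
  nlinarith [sq_nonneg (Real.sqrt (∑ l, (q l)^2) - Real.sqrt (∑ l, (c l)^2)),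
    Real.sqrt_nonneg (∑ l, (q l)^2), Real.sqrt_nonneg (∑ l, (c l)^2)]

private lemma contract {d k : ℕ} (X : Matrix (Fin d) (Fin k) ℝ) (hX : Xᵀ * X = 1)
    (c : Fin d → ℝ) : ∑ a, (Xᵀ.mulVec c a)^2 ≤ ∑ l, (c l)^2 := by
  have hPs : (X * Xᵀ)ᵀ = X * Xᵀ := by rw [Matrix.transpose_mul, Matrix.transpose_transpose]
  have hPi : (X * Xᵀ) * (X * Xᵀ) = X * Xᵀ := by
    rw [Matrix.mul_assoc, ← Matrix.mul_assoc Xᵀ X Xᵀ, hX, Matrix.one_mul]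
  have key : ∑ a, (Xᵀ.mulVec c a)^2 = ∑ l, ((X * Xᵀ).mulVec c l)^2 := by
    set q := Xᵀ.mulVec c with hq
    have h1 : (X.mulVec q) ⬝ᵥ (X.mulVec q) = q ⬝ᵥ q := by
      calc (X.mulVec q) ⬝ᵥ (X.mulVec q) = ((X.mulVec q) ᵥ* X) ⬝ᵥ q :=
            Matrix.dotProduct_mulVec _ X q
        _ = (Xᵀ.mulVec (X.mulVec q)) ⬝ᵥ q := by rw [Matrix.mulVec_transpose]
        _ = ((Xᵀ * X).mulVec q) ⬝ᵥ q := by rw [← Matrix.mulVec_mulVec]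
        _ = q ⬝ᵥ q := by rw [hX, Matrix.one_mulVec]
    have h2 : (X * Xᵀ).mulVec c = X.mulVec q := by rw [hq, Matrix.mulVec_mulVec]
    rw [h2]
    simpa [dotProduct, sq] using h1.symm
  rw [key]
  exact proj_contract (X * Xᵀ) hPs hPi c

/-- Entrywise bound on U Uᵀ - M from incoherence of X and of the top eigenspace W of UUᵀ. -/
theorem entrywise_bound_from_incoherence {d k : ℕ}
    (X : Matrix (Fin d) (Fin k) ℝ) (S : Fin k → ℝ)
    (hX : Xᵀ * X = 1) (hS : ∀ i, 0 < S i)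
    (M : Matrix (Fin d) (Fin d) ℝ) (hM : M = X * Matrix.diagonal S * Xᵀ)
    (μ μ' : ℝ) (hXinc : ∀ i, ∑ j, (X i j)^2 ≤ μ * k / d)
    (U W : Matrix (Fin d) (Fin k) ℝ) (D : Fin k → ℝ)
    (hW : Wᵀ * W = 1) (hD : ∀ i, 0 ≤ D i)
    (hUU : U * Uᵀ = W * Matrix.diagonal D * Wᵀ)
    (hWinc : ∀ i, ∑ j, (W i j)^2 ≤ μ' * k / d) :
    ∀ i j, |(U * Uᵀ - M) i j| ≤
      (Real.sqrt (μ * k / d) + Real.sqrt (μ' * k / d)) * frob (U * Uᵀ - M) := by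
  intro i j
  set Δ : Matrix (Fin d) (Fin d) ℝ := U * Uᵀ - M with hΔ
  set B : Matrix (Fin d) (Fin d) ℝ := Δ - X * Xᵀ * Δ with hBdef
  have hΔeq : Δ = W * Matrix.diagonal D * Wᵀ - X * Matrix.diagonal S * Xᵀ := by
    rw [hΔ, hUU, hM]
  -- B = (1 - XXᵀ) (W D Wᵀ)
  have hQX : (1 - X * Xᵀ) * X = 0 := by
    rw [Matrix.sub_mul, Matrix.one_mul, Matrix.mul_assoc, hX, Matrix.mul_one, sub_self]
  have hB2 : B = (1 - X * Xᵀ) * (W * Matrix.diagonal D * Wᵀ) := by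
    have h1 : B = (1 - X * Xᵀ) * Δ := by rw [Matrix.sub_mul, Matrix.one_mul, hBdef]
    rw [h1, hΔeq, Matrix.mul_sub]
    have h2 : (1 - X * Xᵀ) * (X * Matrix.diagonal S * Xᵀ) = 0 := by
      rw [← Matrix.mul_assoc, ← Matrix.mul_assoc, hQX, Matrix.zero_mul, Matrix.zero_mul]
    rw [h2, sub_zero]
  have hBWW : B * W * Wᵀ = B := by
    rw [hB2]
    simp only [Matrix.mul_assoc]
    rw [show Wᵀ * (W * Wᵀ) = Wᵀ from by rw [← Matrix.mul_assoc, hW, Matrix.one_mul]]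
  -- decomposition
  have hsplit : Δ i j = (∑ a, X i a * (Xᵀ * Δ) a j) + ∑ a, (B * W) i a * W j a := by
    have h1 : (∑ a, X i a * (Xᵀ * Δ) a j) = (X * Xᵀ * Δ) i j := by
      rw [Matrix.mul_assoc, Matrix.mul_apply]
    have h2 : (∑ a, (B * W) i a * W j a) = B i j := by
      conv_rhs => rw [← hBWW]
      rw [Matrix.mul_apply]
      simp [Matrix.transpose_apply]
    rw [h1, h2, hBdef, hΔ]
    simp only [Matrix.sub_apply]
    ring
  set F : ℝ := frob Δ with hF
  have hFdef : F = Real.sqrt (∑ i', ∑ j', (Δ i' j')^2) := rfl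
  have hΔsq_nonneg : (0:ℝ) ≤ ∑ i', ∑ j', (Δ i' j')^2 := by positivity
  -- column bound
  have hcol : ∑ a, ((Xᵀ * Δ) a j)^2 ≤ ∑ i', ∑ j', (Δ i' j')^2 := by
    have h1 : ∀ a, (Xᵀ * Δ) a j = Xᵀ.mulVec (fun l => Δ l j) a := by
      intro a; rw [Matrix.mul_apply, Matrix.mulVec]; rfl
    calc ∑ a, ((Xᵀ * Δ) a j)^2 = ∑ a, (Xᵀ.mulVec (fun l => Δ l j) a)^2 := by
          simp_rw [h1]
      _ ≤ ∑ l, (Δ l j)^2 := contract X hX _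
      _ ≤ ∑ i', ∑ j', (Δ i' j')^2 := by
          apply Finset.sum_le_sum
          intro l _
          exact Finset.single_le_sum (f := fun j' => (Δ l j')^2)
            (fun _ _ => sq_nonneg _) (Finset.mem_univ j)
  -- Frobenius bound on B
  have hBF : ∑ i', ∑ j', (B i' j')^2 ≤ ∑ i', ∑ j', (Δ i' j')^2 := by
    have hQs : (1 - X * Xᵀ)ᵀ = 1 - X * Xᵀ := by
      rw [Matrix.transpose_sub, Matrix.transpose_one, Matrix.transpose_mul,
        Matrix.transpose_transpose]
    have hQi : (1 - X * Xᵀ) * (1 - X * Xᵀ) = 1 - X * Xᵀ := by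
      have hPi : (X * Xᵀ) * (X * Xᵀ) = X * Xᵀ := by
        rw [Matrix.mul_assoc, ← Matrix.mul_assoc Xᵀ X Xᵀ, hX, Matrix.one_mul]
      simp only [Matrix.mul_sub, Matrix.sub_mul, Matrix.one_mul, Matrix.mul_one, hPi]
      abel
    have hBQ : B = (1 - X * Xᵀ) * Δ := by rw [Matrix.sub_mul, Matrix.one_mul, hBdef]
    rw [Finset.sum_comm (f := fun i' j' => (B i' j')^2),
      Finset.sum_comm (f := fun i' j' => (Δ i' j')^2)]
    apply Finset.sum_le_sum
    intro j' _
    have h1 : ∀ l, B l j' = (1 - X * Xᵀ).mulVec (fun m => Δ m j') l := by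
      intro l; rw [hBQ, Matrix.mul_apply, Matrix.mulVec]; rfl
    simp_rw [h1]
    exact proj_contract _ hQs hQi _
  -- row bound on B * W
  have hrow : ∑ a, ((B * W) i a)^2 ≤ ∑ i', ∑ j', (Δ i' j')^2 := by
    have h1 : ∀ a, (B * W) i a = Wᵀ.mulVec (fun l => B i l) a := by
      intro a
      rw [Matrix.mul_apply, Matrix.mulVec]
      simp [dotProduct, Matrix.transpose_apply, mul_comm]
    calc ∑ a, ((B * W) i a)^2 = ∑ a, (Wᵀ.mulVec (fun l => B i l) a)^2 := by simp_rw [h1]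
      _ ≤ ∑ l, (B i l)^2 := contract W hW _
      _ ≤ ∑ i', ∑ j', (B i' j')^2 :=
          Finset.single_le_sum (f := fun i' => ∑ j', (B i' j')^2)
            (fun _ _ => by positivity) (Finset.mem_univ i)
      _ ≤ _ := hBF
  -- assemble
  have hT1 : |∑ a, X i a * (Xᵀ * Δ) a j| ≤ Real.sqrt (μ * k / d) * F := by
    refine le_trans (cs_abs _ _) (mul_le_mul ?_ ?_ (Real.sqrt_nonneg _) (Real.sqrt_nonneg _))
    · exact Real.sqrt_le_sqrt (hXinc i)
    · rw [hFdef]; exact Real.sqrt_le_sqrt hcol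
  have hT2 : |∑ a, (B * W) i a * W j a| ≤ F * Real.sqrt (μ' * k / d) := by
    refine le_trans (cs_abs _ _) (mul_le_mul ?_ ?_ (Real.sqrt_nonneg _) ?_)
    · rw [hFdef]; exact Real.sqrt_le_sqrt hrow
    · exact Real.sqrt_le_sqrt (hWinc j)
    · rw [hFdef]; exact Real.sqrt_nonneg _
  calc |Δ i j| = |(∑ a, X i a * (Xᵀ * Δ) a j) + ∑ a, (B * W) i a * W j a| := by rw [hsplit]
    _ ≤ |∑ a, X i a * (Xᵀ * Δ) a j| + |∑ a, (B * W) i a * W j a| := abs_add_le _ _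
    _ ≤ Real.sqrt (μ * k / d) * F + F * Real.sqrt (μ' * k / d) := add_le_add hT1 hT2
    _ = (Real.sqrt (μ * k / d) + Real.sqrt (μ' * k / d)) * F := by ring
end

section
/- For a symmetric matrix M ∈ R^{d×d}, U ∈ R^{d×k}, and SG(U) = 2 d² (U Uᵀ - M)_{ij} (eᵢ eⱼᵀ + eⱼ eᵢᵀ) U with (i,j) uniform on [d]×[d], the expected squared Frobenius norm satisfies E ||SG(U)||_F² ≤ 16 d² ||U Uᵀ - M||_F² · max_i ||eᵢᵀ U||². -/
open Matrix

lemma frob_sq {m n : ℕ} (A : Matrix (Fin m) (Fin n) ℝ) :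
    (frob A)^2 = ∑ i, ∑ j, (A i j)^2 := by
  unfold frob
  exact Real.sq_sqrt (by positivity)

/-- Second-moment bound for the stochastic gradient. -/
theorem sg_second_moment_psd {d k : ℕ} (hd : 0 < d)
    (M : Matrix (Fin d) (Fin d) ℝ) (hM : M.IsSymm) (U : Matrix (Fin d) (Fin k) ℝ) :
    ((d:ℝ)^2)⁻¹ * ∑ i : Fin d, ∑ j : Fin d,
        (frob ((2 * (d:ℝ)^2 * ((U * Uᵀ - M) i j)) •
          ((Matrix.single i j (1:ℝ) + Matrix.single j i 1) * U)))^2 ≤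
      16 * (d:ℝ)^2 * (frob (U * Uᵀ - M))^2 * (⨆ l : Fin d, ∑ j, (U l j)^2) := by
  set E := U * Uᵀ - M with hE
  set mx := ⨆ l : Fin d, ∑ j, (U l j)^2 with hmx
  have hrow : ∀ l : Fin d, ∑ j, (U l j)^2 ≤ mx := fun l =>
    le_ciSup (f := fun l : Fin d => ∑ j, (U l j)^2) (Set.Finite.bddAbove (Set.finite_range _)) l
  have hmx0 : 0 ≤ mx := le_trans (by positivity) (hrow ⟨0, hd⟩)
  have key : ∀ i j : Fin d,
      (frob ((2 * (d:ℝ)^2 * (E i j)) •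
        ((Matrix.single i j (1:ℝ) + Matrix.single j i 1) * U)))^2 ≤
      16 * (d:ℝ)^4 * (E i j)^2 * mx := by
    intro i j
    rw [frob_sq]
    have hA : ∀ (r : Fin d) (c : Fin k),
        ((((2 * (d:ℝ)^2 * (E i j)) •
          ((Matrix.single i j (1:ℝ) + Matrix.single j i 1) * U)) : Matrix (Fin d) (Fin k) ℝ) r c)
        = 2 * (d:ℝ)^2 * (E i j) *
            ((if i = r then U j c else 0) + (if j = r then U i c else 0)) := by
      intro r c
      simp [Matrix.smul_apply, Matrix.mul_apply, Matrix.single, ite_and, add_mul,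
        ite_mul, Finset.sum_add_distrib, Finset.sum_ite_eq]
    calc ∑ r, ∑ c, (((((2 * (d:ℝ)^2 * (E i j)) •
          ((Matrix.single i j (1:ℝ) + Matrix.single j i 1) * U)) : Matrix (Fin d) (Fin k) ℝ) r c))^2
        ≤ ∑ r, ∑ c, (4 * (d:ℝ)^4 * (E i j)^2 *
            (2 * (if i = r then (U j c)^2 else 0) + 2 * (if j = r then (U i c)^2 else 0))) := by
          apply Finset.sum_le_sum; intro r _
          apply Finset.sum_le_sum; intro c _
          rw [hA r c]
          by_cases h1 : i = r <;> by_cases h2 : j = r <;> simp [h1, h2] <;> nlinarith [sq_nonneg ((d:ℝ)*E i j), sq_nonneg ((d:ℝ)^2*E i j * (U j c - U i c)), sq_nonneg ((d:ℝ)^2*E i j * (U j c + U i c))]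
      _ = 4 * (d:ℝ)^4 * (E i j)^2 *
            (2 * (∑ c, (U j c)^2) + 2 * (∑ c, (U i c)^2)) := by
          rw [Finset.sum_comm]
          have hc : ∀ c : Fin k, (∑ r : Fin d, (4 * (d:ℝ)^4 * (E i j)^2 *
              (2 * (if i = r then (U j c)^2 else 0) + 2 * (if j = r then (U i c)^2 else 0))))
              = (4 * (d:ℝ)^4 * (E i j)^2 * 2) * (U j c)^2
                + (4 * (d:ℝ)^4 * (E i j)^2 * 2) * (U i c)^2 := by
            intro c
            simp [Finset.sum_add_distrib, mul_add, Finset.mul_sum, Finset.sum_ite_eq]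
            ring
          simp only [hc, Finset.sum_add_distrib, ← Finset.mul_sum]
          ring
      _ ≤ 16 * (d:ℝ)^4 * (E i j)^2 * mx := by
          have h1 := hrow i
          have h2 := hrow j
          nlinarith [sq_nonneg ((d:ℝ)^2 * E i j)]
  have hsum : ∑ i : Fin d, ∑ j : Fin d,
      (frob ((2 * (d:ℝ)^2 * (E i j)) •
        ((Matrix.single i j (1:ℝ) + Matrix.single j i 1) * U)))^2
      ≤ 16 * (d:ℝ)^4 * (frob E)^2 * mx := by
    calc _ ≤ ∑ i : Fin d, ∑ j : Fin d, 16 * (d:ℝ)^4 * (E i j)^2 * mx := by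
            apply Finset.sum_le_sum; intro i _
            exact Finset.sum_le_sum fun j _ => key i j
      _ = 16 * (d:ℝ)^4 * (frob E)^2 * mx := by
            rw [frob_sq]
            simp only [Finset.mul_sum, Finset.sum_mul]
  have hd' : (0:ℝ) < (d:ℝ)^2 := by positivity
  rw [inv_mul_le_iff₀ hd']
  calc _ ≤ 16 * (d:ℝ)^4 * (frob E)^2 * mx := hsum
    _ = (d:ℝ)^2 * (16 * (d:ℝ)^2 * (frob E)^2 * mx) := by ring
end

section
/- Let U, V ∈ R^{d×k} and P_U, P_V ∈ R^{k×k} be invertible matrices with P_U P_Vᵀ = I. Then for any scalars a, any i, j, (U P_U - a eᵢ eⱼᵀ V P_V)(V P_V - a eⱼ eᵢᵀ U P_U)ᵀ = (U - a eᵢ eⱼᵀ V P_V P_U^{-1})(V - a eⱼ eᵢᵀ U P_U P_V^{-1})ᵀ, i.e., SGD-type updates commute with balanced reparametrization in the sense that the product U Vᵀ after update is invariant. -/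
open Matrix

/-- SGD-type updates commute with balanced reparametrization. -/
theorem sgd_update_reparametrization {d₁ d₂ k : ℕ}
    (U : Matrix (Fin d₁) (Fin k) ℝ) (V : Matrix (Fin d₂) (Fin k) ℝ)
    (PU PV : Matrix (Fin k) (Fin k) ℝ) [Invertible PU] [Invertible PV]
    (hP : PU * PVᵀ = 1) (a : ℝ) (i : Fin d₁) (j : Fin d₂) :
    (U * PU - a • (Matrix.single i j (1:ℝ) * (V * PV))) *
        (V * PV - a • (Matrix.single j i (1:ℝ) * (U * PU)))ᵀ =
      (U - a • (Matrix.single i j (1:ℝ) * V * PV * PU⁻¹)) *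
        (V - a • (Matrix.single j i (1:ℝ) * U * PU * PV⁻¹))ᵀ := by
  have h1 : PV * PUᵀ = 1 := by
    have := congrArg Matrix.transpose hP
    simpa [Matrix.transpose_mul] using this
  have h2 : PU⁻¹ = PVᵀ := Matrix.inv_eq_right_inv hP
  have h3 : PV⁻¹ = PUᵀ := Matrix.inv_eq_right_inv h1
  have h4 : PVᵀ * PU = 1 := mul_eq_one_comm.mp hP
  have h5 : PUᵀ * PV = 1 := mul_eq_one_comm.mp h1
  have c1 : ∀ (X : Matrix (Fin k) (Fin d₂) ℝ), PU * (PVᵀ * X) = X := by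
    intro X; rw [← Matrix.mul_assoc, hP, Matrix.one_mul]
  have c2 : ∀ (X : Matrix (Fin k) (Fin d₁) ℝ), PV * (PUᵀ * X) = X := by
    intro X; rw [← Matrix.mul_assoc, h1, Matrix.one_mul]
  have c3 : ∀ (X : Matrix (Fin k) (Fin d₂) ℝ), PVᵀ * (PU * X) = X := by
    intro X; rw [← Matrix.mul_assoc, h4, Matrix.one_mul]
  have c4 : ∀ (X : Matrix (Fin k) (Fin d₁) ℝ), PUᵀ * (PV * X) = X := by
    intro X; rw [← Matrix.mul_assoc, h5, Matrix.one_mul]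
  simp only [h2, h3, Matrix.mul_sub, Matrix.sub_mul, Matrix.transpose_sub,
    Matrix.transpose_mul, Matrix.transpose_smul, Matrix.transpose_transpose,
    Matrix.smul_mul, Matrix.mul_smul, Matrix.mul_assoc, smul_smul, c1, c2, c3, c4]
end

section
/- Let f(U) = ||U Uᵀ - M||_F² for symmetric PSD M of rank k with eigendecomposition M = X S Xᵀ. Every critical point U of f (i.e., (U Uᵀ - M)U = 0) with σ_k(U) > 0 and σ_min(Xᵀ U) > 0 satisfies U Uᵀ = M. Equivalently, any U with ∇f(U)=0 lying in the region {σ_min(Xᵀ U) ≥ γ} for some γ > 0 is a global minimizer. -/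
open Matrix

lemma sigmaMin_pos_mulVec_inj {m n : ℕ} {A : Matrix (Fin m) (Fin n) ℝ}
    (h : 0 < sigmaMin A) : ∀ x : Fin n → ℝ, A *ᵥ x = 0 → x = 0 := by
  intro x hx
  by_contra hx0
  have hx'0 : (WithLp.equiv 2 (Fin n → ℝ)).symm x ≠ 0 := fun hc => hx0 (by
    have := congrArg (WithLp.equiv 2 (Fin n → ℝ)) hc
    simpa using this)
  set x' : EuclideanSpace ℝ (Fin n) := (WithLp.equiv 2 (Fin n → ℝ)).symm x with hx'
  have hnx : ‖x'‖ ≠ 0 := norm_ne_zero_iff.mpr hx'0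
  have hny : ‖(‖x'‖⁻¹ • x' : EuclideanSpace ℝ (Fin n))‖ = 1 := by
    rw [norm_smul, norm_inv, norm_norm, inv_mul_cancel₀ hnx]
  have hAy : Matrix.toEuclideanLin A (‖x'‖⁻¹ • x') = 0 := by
    rw [LinearMap.map_smul]
    have : Matrix.toEuclideanLin A x' = 0 := by
      rw [hx']
      change WithLp.toLp 2 (A *ᵥ x) = 0
      rw [hx]
      simp
    rw [this, smul_zero]
  have hmem : (0:ℝ) ∈ {c | ∃ x : EuclideanSpace ℝ (Fin n), ‖x‖ = 1 ∧ c = ‖Matrix.toEuclideanLin A x‖} :=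
    ⟨_, hny, by rw [hAy, norm_zero]⟩
  have hbdd : BddBelow {c | ∃ x : EuclideanSpace ℝ (Fin n), ‖x‖ = 1 ∧ c = ‖Matrix.toEuclideanLin A x‖} :=
    ⟨0, fun c ⟨z, _, hz⟩ => hz ▸ norm_nonneg _⟩
  exact absurd (lt_of_lt_of_le h (csInf_le hbdd hmem)) (lt_irrefl 0)

/-- Critical points away from the saddle surface are global minima: U Uᵀ = M. -/
theorem critical_points_away_from_saddles {d k : ℕ}
    (X : Matrix (Fin d) (Fin k) ℝ) (S : Fin k → ℝ)
    (hX : Xᵀ * X = 1) (hS : ∀ i, 0 < S i)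
    (M : Matrix (Fin d) (Fin d) ℝ) (hM : M = X * Matrix.diagonal S * Xᵀ)
    (U : Matrix (Fin d) (Fin k) ℝ)
    (hcrit : (U * Uᵀ - M) * U = 0)
    (hσk : 0 < sigmaMin U) (hangle : 0 < sigmaMin (Xᵀ * U)) :
    U * Uᵀ = M := by
  have hUinj := sigmaMin_pos_mulVec_inj hσk
  have hAunit : IsUnit (Xᵀ * U) := by
    rw [← Matrix.mulVec_injective_iff_isUnit]
    intro a b hab
    have key := sigmaMin_pos_mulVec_inj hangle
    have h0 : (Xᵀ * U) *ᵥ (a - b) = 0 := by rw [Matrix.mulVec_sub, hab, sub_self]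
    exact sub_eq_zero.mp (key _ h0)
  have hBunit : IsUnit (Uᵀ * U) := by
    rw [← Matrix.mulVec_injective_iff_isUnit]
    intro a b hab
    have key : ∀ x : Fin k → ℝ, (Uᵀ * U) *ᵥ x = 0 → x = 0 := by
      intro x hx
      have h1 : (U *ᵥ x) ⬝ᵥ (U *ᵥ x) = 0 := by
        have : x ⬝ᵥ ((Uᵀ * U) *ᵥ x) = 0 := by rw [hx, dotProduct_zero]
        rw [← Matrix.mulVec_mulVec, Matrix.dotProduct_mulVec, Matrix.vecMul_transpose] at this
        exact this
      exact hUinj x (dotProduct_self_eq_zero.mp h1)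
    have h0 : (Uᵀ * U) *ᵥ (a - b) = 0 := by rw [Matrix.mulVec_sub, hab, sub_self]
    exact sub_eq_zero.mp (key _ h0)
  obtain ⟨A, hA⟩ : ∃ A, A = Xᵀ * U := ⟨_, rfl⟩
  obtain ⟨B, hB⟩ : ∃ B, B = Uᵀ * U := ⟨_, rfl⟩
  obtain ⟨D, hD⟩ : ∃ D, D = Matrix.diagonal S := ⟨_, rfl⟩
  rw [← hA] at hAunit
  rw [← hB] at hBunit
  have hAdet : IsUnit A.det := (Matrix.isUnit_iff_isUnit_det A).mp hAunit
  have hBdet : IsUnit B.det := (Matrix.isUnit_iff_isUnit_det B).mp hBunit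
  have hAinv : A * A⁻¹ = 1 := Matrix.mul_nonsing_inv _ hAdet
  have hBinv : B * B⁻¹ = 1 := Matrix.mul_nonsing_inv _ hBdet
  have h : U * Uᵀ * U = M * U := by
    have := hcrit
    rwa [Matrix.sub_mul, sub_eq_zero] at this
  have e2 : U * B = X * (D * A) := by
    calc U * B = U * Uᵀ * U := by rw [hB, Matrix.mul_assoc]
      _ = M * U := h
      _ = X * (D * A) := by
          rw [hM, hA, hD, Matrix.mul_assoc, Matrix.mul_assoc]
  have e1 : A * B = D * A := by
    calc A * B = Xᵀ * (U * B) := by rw [hA, Matrix.mul_assoc]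
      _ = Xᵀ * (X * (D * A)) := by rw [e2]
      _ = D * A := by rw [← Matrix.mul_assoc, hX, Matrix.one_mul]
  have hU' : U = X * (D * A) * B⁻¹ := by
    calc U = U * (B * B⁻¹) := by rw [hBinv, Matrix.mul_one]
      _ = U * B * B⁻¹ := by rw [Matrix.mul_assoc]
      _ = X * (D * A) * B⁻¹ := by rw [e2]
  have h2 : A = D * A * B⁻¹ := by
    calc A = Xᵀ * U := hA
      _ = Xᵀ * (X * (D * A) * B⁻¹) := by rw [← hU']
      _ = Xᵀ * X * (D * A) * B⁻¹ := by rw [← Matrix.mul_assoc, ← Matrix.mul_assoc]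
      _ = D * A * B⁻¹ := by rw [hX, Matrix.one_mul]
  have e3 : U = X * A := by
    calc U = X * (D * A) * B⁻¹ := hU'
      _ = X * (D * A * B⁻¹) := by rw [Matrix.mul_assoc]
      _ = X * A := by rw [← h2]
  have hBAA : B = Aᵀ * A := by
    rw [hB, e3, Matrix.transpose_mul, Matrix.mul_assoc, ← Matrix.mul_assoc Xᵀ X A, hX,
      Matrix.one_mul]
  have hAAT : A * Aᵀ = D := by
    calc A * Aᵀ = A * Aᵀ * (A * A⁻¹) := by rw [hAinv, Matrix.mul_one]
      _ = A * Aᵀ * A * A⁻¹ := by simp only [Matrix.mul_assoc]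
      _ = A * (Aᵀ * A) * A⁻¹ := by rw [Matrix.mul_assoc A Aᵀ A]
      _ = A * B * A⁻¹ := by rw [← hBAA]
      _ = D * A * A⁻¹ := by rw [e1]
      _ = D * (A * A⁻¹) := by rw [Matrix.mul_assoc]
      _ = D := by rw [hAinv, Matrix.mul_one]
  rw [e3, Matrix.transpose_mul]
  calc X * A * (Aᵀ * Xᵀ) = X * (A * (Aᵀ * Xᵀ)) := by rw [Matrix.mul_assoc]
    _ = X * (A * Aᵀ * Xᵀ) := by rw [Matrix.mul_assoc A Aᵀ Xᵀ]
    _ = X * (D * Xᵀ) := by rw [hAAT]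
    _ = X * Matrix.diagonal S * Xᵀ := by rw [hD, Matrix.mul_assoc]
    _ = M := hM.symm
end
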